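/- arXiv:2511.03761 — 2 statements merged into one kernel-verified Lean document; each statement's English description precedes it below -/
import Mathlib

section
/- Consider a TxnSP instance in which no two jobs conflict. Then the minimum of the makespan over all feasible schedules formed by the full job set J is attained and equals the minimum over all assignments f : J → {1,…,m} of the maximum machine load max_{k∈{1,…,m}} Σ_{α : f(α)=k} L(α), i.e. the optimal value of the multi-way number partitioning problem on the job lengths. -/
/-!  Formalization of TxnSP (transaction scheduling) basic notions.

A TxnSP instance: a finite job type `ι`, lengths `L : ι → ℝ` (positive),
a symmetric irreflexive conflict relation `C`, and `m ≥ 1` identical machines.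
A schedule formed by a subset `jobs` assigns each job a machine and a start time. -/

structure Sched (ι : Type*) (m : ℕ) where
  jobs : Finset ι
  machine : ι → Fin m
  start : ι → ℝ

namespace Sched

variable {ι : Type*} {m : ℕ}

/-- Completion time of a job. -/
noncomputable def ct (s : Sched ι m) (L : ι → ℝ) (a : ι) : ℝ :=
  s.start a + L a

/-- A schedule is feasible if all start times are nonnegative and any two distinct
jobs of the schedule that are on the same machine or conflict have disjoint open
processing intervals. -/
def Feasible (s : Sched ι m) (L : ι → ℝ) (C : ι → ι → Prop) : Prop :=
  (∀ a ∈ s.jobs, 0 ≤ s.start a) ∧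
  ∀ a ∈ s.jobs, ∀ b ∈ s.jobs, a ≠ b → (s.machine a = s.machine b ∨ C a b) →
    s.ct L a ≤ s.start b ∨ s.ct L b ≤ s.start a

/-- Processing time of machine `k`: the maximum completion time among jobs assigned
to it (`0` if none). -/
noncomputable def procTime (s : Sched ι m) (L : ι → ℝ) (k : Fin m) : ℝ :=
  sSup (insert 0 {x : ℝ | ∃ a ∈ s.jobs, s.machine a = k ∧ x = s.ct L a})

/-- Makespan: maximum processing time over the machines. -/
noncomputable def ms (s : Sched ι m) (L : ι → ℝ) : ℝ :=
  sSup (Set.range fun k : Fin m => s.procTime L k)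

/-- Minimum time: minimum processing time over the machines. -/
noncomputable def mt (s : Sched ι m) (L : ι → ℝ) : ℝ :=
  sInf (Set.range fun k : Fin m => s.procTime L k)

/-- A subschedule: a feasible schedule in which no job's start time can be strictly
decreased (keeping its machine assignment and all other jobs fixed) without violating
feasibility. -/
def IsSub [DecidableEq ι] (s : Sched ι m) (L : ι → ℝ) (C : ι → ι → Prop) : Prop :=
  s.Feasible L C ∧
  ∀ a ∈ s.jobs, ∀ t : ℝ, t < s.start a →
    ¬ (Sched.mk s.jobs s.machine (Function.update s.start a t)).Feasible L C

/-- One instruction of a derivation plan: insert the (new) job `a` on machine `k`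
at the earliest start time keeping the whole schedule feasible and not earlier than
the completion times of jobs already on machine `k`. -/
def InsertStep [DecidableEq ι] (L : ι → ℝ) (C : ι → ι → Prop)
    (s : Sched ι m) (a : ι) (k : Fin m) (s' : Sched ι m) : Prop :=
  a ∉ s.jobs ∧
  s'.jobs = insert a s.jobs ∧
  s'.machine = Function.update s.machine a k ∧
  (∀ b ∈ s.jobs, s'.start b = s.start b) ∧
  s'.Feasible L C ∧
  (∀ b ∈ s.jobs, s.machine b = k → s.ct L b ≤ s'.start a) ∧
  ∀ t : ℝ,
    (Sched.mk s'.jobs s'.machine (Function.update s'.start a t)).Feasible L C →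
    (∀ b ∈ s.jobs, s.machine b = k → s.ct L b ≤ t) →
    s'.start a ≤ t

/-- Applying a derivation plan (a finite list of (job, machine) instructions)
to a base subschedule, inserting the listed jobs in order. -/
def ApplyPlan [DecidableEq ι] (L : ι → ℝ) (C : ι → ι → Prop) :
    Sched ι m → List (ι × Fin m) → Sched ι m → Prop
  | s, [], s' => s' = s
  | s, (a, k) :: rest, s' => ∃ s₁, InsertStep L C s a k s₁ ∧ ApplyPlan L C s₁ rest s'

/-- `j` is derived from `i` (equivalently, `i` is a root of `j`) if `j` is obtained
from `i` by applying some derivation plan. -/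
def DerivedFrom [DecidableEq ι] (L : ι → ℝ) (C : ι → ι → Prop) (i j : Sched ι m) : Prop :=
  ∃ p : List (ι × Fin m), ApplyPlan L C i p j

/-- The set of last jobs: jobs with the latest completion time on their machine. -/
def LJ (s : Sched ι m) (L : ι → ℝ) : Set ι :=
  {a | a ∈ s.jobs ∧ ∀ b ∈ s.jobs, s.machine b = s.machine a → s.ct L b ≤ s.ct L a}

/-- Two subschedules formed by the same subset are equivalent if they have the same
last jobs and the same completion time for every job. -/
def Equivalent (i j : Sched ι m) (L : ι → ℝ) : Prop :=
  i.jobs = j.jobs ∧ i.LJ L = j.LJ L ∧ ∀ a ∈ i.jobs, i.ct L a = j.ct L a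

/-- A schedule formed by the full job set is optimal if it is a subschedule whose
makespan is ≤ the makespan of every subschedule formed by the full job set. -/
def Optimal [DecidableEq ι] [Fintype ι] (L : ι → ℝ) (C : ι → ι → Prop)
    (s : Sched ι m) : Prop :=
  s.jobs = Finset.univ ∧ s.IsSub L C ∧
  ∀ t : Sched ι m, t.jobs = Finset.univ → t.IsSub L C → s.ms L ≤ t.ms L

/-- Moving job `a` of `s` to another machine `k`, re-placing it at the earliest
feasible start time on that machine, all other jobs fixed. -/
def Move [DecidableEq ι] (L : ι → ℝ) (C : ι → ι → Prop)
    (s : Sched ι m) (a : ι) (k : Fin m) (s' : Sched ι m) : Prop :=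
  a ∈ s.jobs ∧ k ≠ s.machine a ∧
  s'.jobs = s.jobs ∧
  s'.machine = Function.update s.machine a k ∧
  (∀ b ∈ s.jobs, b ≠ a → s'.start b = s.start b) ∧
  s'.Feasible L C ∧
  ∀ t : ℝ,
    (Sched.mk s'.jobs s'.machine (Function.update s'.start a t)).Feasible L C →
    s'.start a ≤ t

/-- `s` is reducible by a job `a ∈ LJ s` if its makespan can be strictly decreased
by moving `a` to another machine. -/
def ReducibleBy [DecidableEq ι] (L : ι → ℝ) (C : ι → ι → Prop)
    (s : Sched ι m) (a : ι) : Prop :=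
  a ∈ s.LJ L ∧ ∃ (k : Fin m) (s' : Sched ι m), Move L C s a k s' ∧ s'.ms L < s.ms L

/-- `s` is non-reducible if it is reducible by no job. -/
def NonReducible [DecidableEq ι] (L : ι → ℝ) (C : ι → ι → Prop) (s : Sched ι m) : Prop :=
  ∀ a : ι, ¬ s.ReducibleBy L C a

/-- One step of the derivation rule: insert the next job on a machine with the
smallest current processing time (smallest index in case of ties), at the earliest
feasible start time. -/
def RuleStep [DecidableEq ι] (L : ι → ℝ) (C : ι → ι → Prop)
    (s : Sched ι m) (a : ι) (s' : Sched ι m) : Prop :=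
  ∃ k : Fin m,
    (∀ k' : Fin m, s.procTime L k ≤ s.procTime L k') ∧
    (∀ k' : Fin m, s.procTime L k' = s.procTime L k → k ≤ k') ∧
    InsertStep L C s a k s'

/-- Creating a schedule from a sequence of jobs by the derivation rule. -/
def RuleApply [DecidableEq ι] (L : ι → ℝ) (C : ι → ι → Prop) :
    Sched ι m → List ι → Sched ι m → Prop
  | s, [], s' => s' = s
  | s, a :: rest, s' => ∃ s₁, RuleStep L C s a s₁ ∧ RuleApply L C s₁ rest s'

/-- A schedule is representable if it can be created from some finite sequence of
distinct jobs by the derivation rule, starting from the empty subschedule. -/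
def Representable [DecidableEq ι] (L : ι → ℝ) (C : ι → ι → Prop) (s : Sched ι m) : Prop :=
  ∃ (e : Sched ι m) (l : List ι), e.jobs = ∅ ∧ RuleApply L C e l s

end Sched

namespace TxnAux

open Finset

variable {ι : Type*} [Fintype ι] [DecidableEq ι] {m : ℕ}

/-- The set whose sSup defines `procTime` is finite. -/
lemma procSet_finite (s : Sched ι m) (L : ι → ℝ) (k : Fin m) :
    (insert (0:ℝ) {x : ℝ | ∃ a ∈ s.jobs, s.machine a = k ∧ x = s.ct L a}).Finite := by
  apply Set.Finite.insert
  apply Set.Finite.subset (s.jobs.finite_toSet.image (s.ct L))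
  rintro x ⟨a, ha, -, rfl⟩
  exact ⟨a, ha, rfl⟩

lemma procTime_nonneg (s : Sched ι m) (L : ι → ℝ) (k : Fin m) :
    0 ≤ s.procTime L k :=
  le_csSup (procSet_finite s L k).bddAbove (Set.mem_insert _ _)

lemma le_procTime (s : Sched ι m) (L : ι → ℝ) {k : Fin m} {a : ι}
    (ha : a ∈ s.jobs) (hk : s.machine a = k) : s.ct L a ≤ s.procTime L k :=
  le_csSup (procSet_finite s L k).bddAbove (Set.mem_insert_of_mem _ ⟨a, ha, hk, rfl⟩)

lemma procTime_le (s : Sched ι m) (L : ι → ℝ) {k : Fin m} {x : ℝ}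
    (h0 : 0 ≤ x) (h : ∀ a ∈ s.jobs, s.machine a = k → s.ct L a ≤ x) :
    s.procTime L k ≤ x := by
  apply csSup_le ⟨0, Set.mem_insert _ _⟩
  rintro y (rfl | ⟨a, ha, hk, rfl⟩)
  · exact h0
  · exact h a ha hk

lemma procTime_le_ms (hm : 0 < m) (s : Sched ι m) (L : ι → ℝ) (k : Fin m) :
    s.procTime L k ≤ s.ms L :=
  le_csSup (Set.finite_range _).bddAbove ⟨k, rfl⟩

lemma ms_le (hm : 0 < m) (s : Sched ι m) (L : ι → ℝ) {x : ℝ}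
    (h : ∀ k : Fin m, s.procTime L k ≤ x) : s.ms L ≤ x := by
  haveI : Nonempty (Fin m) := Fin.pos_iff_nonempty.mp hm
  exact csSup_le (Set.range_nonempty _) (by rintro y ⟨k, rfl⟩; exact h k)

/-- Jobs with pairwise disjoint processing intervals: the total length is bounded by
some completion time. -/
lemma sum_le_of_disjoint (L : ι → ℝ) (hL : ∀ a, 0 < L a) (st : ι → ℝ) :
    ∀ F : Finset ι, (∀ a ∈ F, 0 ≤ st a) →
      (∀ a ∈ F, ∀ b ∈ F, a ≠ b → st a + L a ≤ st b ∨ st b + L b ≤ st a) →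
      F.Nonempty → ∃ a ∈ F, ∑ b ∈ F, L b ≤ st a + L a := by
  intro F
  induction F using Finset.strongInduction with
  | _ F ih =>
    intro hpos hdisj hne
    obtain ⟨a, haF, hmax⟩ := F.exists_max_image st hne
    refine ⟨a, haF, ?_⟩
    have herase : ∀ b ∈ F.erase a, st b + L b ≤ st a := by
      intro b hb
      have hbF := Finset.mem_of_mem_erase hb
      have hba : b ≠ a := Finset.ne_of_mem_erase hb
      rcases hdisj b hbF a haF hba with h | h
      · exact h
      · have := hmax b hbF
        have := hL a
        linarith
    rw [← Finset.sum_erase_add F L haF]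
    rcases (F.erase a).eq_empty_or_nonempty with he | hne'
    · have := hpos a haF
      simp [he]
      linarith
    · obtain ⟨c, hc, hsum⟩ := ih (F.erase a) (Finset.erase_ssubset haF)
        (fun x hx => hpos x (Finset.mem_of_mem_erase hx))
        (fun x hx y hy hxy => hdisj x (Finset.mem_of_mem_erase hx) y
          (Finset.mem_of_mem_erase hy) hxy) hne'
      have := herase c hc
      linarith

/-- In any feasible schedule on the full job set, the load of machine `k` is at most
its processing time. -/
lemma load_le_procTime (s : Sched ι m) (L : ι → ℝ) (hL : ∀ a, 0 < L a)
    (C : ι → ι → Prop) (hfeas : s.Feasible L C) (hjobs : s.jobs = Finset.univ)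
    (k : Fin m) :
    ∑ a ∈ Finset.univ.filter (fun a => s.machine a = k), L a ≤ s.procTime L k := by
  set F := Finset.univ.filter (fun a => s.machine a = k) with hF
  rcases F.eq_empty_or_nonempty with he | hne
  · rw [he]
    simpa using procTime_nonneg s L k
  · obtain ⟨a, haF, hsum⟩ := sum_le_of_disjoint L hL s.start F
      (fun a _ => hfeas.1 a (by rw [hjobs]; exact Finset.mem_univ a))
      (fun a ha b hb hab => by
        have hka : s.machine a = k := (Finset.mem_filter.mp ha).2
        have hkb : s.machine b = k := (Finset.mem_filter.mp hb).2
        exact hfeas.2 a (by rw [hjobs]; exact Finset.mem_univ a) b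
          (by rw [hjobs]; exact Finset.mem_univ b) hab (Or.inl (hka.trans hkb.symm)))
      hne
    have hct : s.ct L a ≤ s.procTime L k :=
      le_procTime s L (by rw [hjobs]; exact Finset.mem_univ a)
        (Finset.mem_filter.mp haF).2
    exact hsum.trans hct

/-- The sequential schedule built from an assignment `f₀`. -/
noncomputable def build (L : ι → ℝ) (f₀ : ι → Fin m) : Sched ι m :=
  ⟨Finset.univ, f₀, fun a =>
    ∑ b ∈ Finset.univ.filter
      (fun b => f₀ b = f₀ a ∧ Fintype.equivFin ι b < Fintype.equivFin ι a), L b⟩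

lemma build_key (L : ι → ℝ) (hL : ∀ a, 0 < L a) (f₀ : ι → Fin m) {a b : ι}
    (hfab : f₀ a = f₀ b) (hab : Fintype.equivFin ι a < Fintype.equivFin ι b) :
    (build L f₀).start a + L a ≤ (build L f₀).start b := by
  classical
  set e := Fintype.equivFin ι
  have hsub : insert a (Finset.univ.filter (fun c => f₀ c = f₀ a ∧ e c < e a)) ⊆
      Finset.univ.filter (fun c => f₀ c = f₀ b ∧ e c < e b) := by
    intro c hc
    rcases Finset.mem_insert.mp hc with rfl | hc
    · exact Finset.mem_filter.mpr ⟨Finset.mem_univ _, hfab, hab⟩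
    · obtain ⟨-, h1, h2⟩ := Finset.mem_filter.mp hc
      exact Finset.mem_filter.mpr ⟨Finset.mem_univ _, h1.trans hfab, h2.trans hab⟩
  have hnotmem : a ∉ Finset.univ.filter (fun c => f₀ c = f₀ a ∧ e c < e a) := by
    simp
  have := Finset.sum_le_sum_of_subset_of_nonneg hsub
    (fun c _ _ => (hL c).le)
  rw [Finset.sum_insert hnotmem] at this
  show (build L f₀).start a + L a ≤ (build L f₀).start b
  unfold build
  simp only
  linarith

lemma build_feasible (L : ι → ℝ) (hL : ∀ a, 0 < L a) (C : ι → ι → Prop)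
    (hnone : ∀ a b : ι, ¬ C a b) (f₀ : ι → Fin m) :
    (build L f₀).Feasible L C := by
  constructor
  · intro a _
    exact Finset.sum_nonneg fun b _ => (hL b).le
  · intro a _ b _ hab hcond
    have hfab : f₀ a = f₀ b := by
      rcases hcond with h | h
      · exact h
      · exact absurd h (hnone a b)
    rcases lt_trichotomy (Fintype.equivFin ι a) (Fintype.equivFin ι b) with h | h | h
    · exact Or.inl (build_key L hL f₀ hfab h)
    · exact absurd ((Fintype.equivFin ι).injective (Fin.eq_of_val_eq (by rw [h]))) hab
    · exact Or.inr (build_key L hL f₀ hfab.symm h)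

lemma build_procTime (L : ι → ℝ) (hL : ∀ a, 0 < L a) (f₀ : ι → Fin m) (k : Fin m) :
    (build L f₀).procTime L k = ∑ a ∈ Finset.univ.filter (fun a => f₀ a = k), L a := by
  classical
  set e := Fintype.equivFin ι
  set Fk := Finset.univ.filter (fun a => f₀ a = k) with hFk
  have hsumnn : (0:ℝ) ≤ ∑ a ∈ Fk, L a := Finset.sum_nonneg fun b _ => (hL b).le
  apply le_antisymm
  · apply procTime_le _ _ hsumnn
    intro a _ hk
    have hsub : insert a (Finset.univ.filter (fun c => f₀ c = f₀ a ∧ e c < e a)) ⊆ Fk := by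
      intro c hc
      rcases Finset.mem_insert.mp hc with rfl | hc
      · exact Finset.mem_filter.mpr ⟨Finset.mem_univ _, hk⟩
      · obtain ⟨-, h1, -⟩ := Finset.mem_filter.mp hc
        exact Finset.mem_filter.mpr ⟨Finset.mem_univ _, h1.trans hk⟩
    have hnotmem : a ∉ Finset.univ.filter (fun c => f₀ c = f₀ a ∧ e c < e a) := by simp
    have := Finset.sum_le_sum_of_subset_of_nonneg hsub (fun c _ _ => (hL c).le)
    rw [Finset.sum_insert hnotmem] at this
    show (build L f₀).start a + L a ≤ _
    unfold build
    simp only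
    linarith
  · rcases Fk.eq_empty_or_nonempty with he | hne
    · rw [hFk] at he
      rw [hFk, he]
      simpa using procTime_nonneg (build L f₀) L k
    · obtain ⟨a, haF, hmax⟩ := Fk.exists_max_image (fun a => e a) hne
      have hka : f₀ a = k := (Finset.mem_filter.mp haF).2
      have hFeq : Fk = insert a (Finset.univ.filter (fun c => f₀ c = f₀ a ∧ e c < e a)) := by
        ext c
        simp only [hFk, Finset.mem_insert, Finset.mem_filter, Finset.mem_univ, true_and]
        constructor
        · intro hc
          rcases eq_or_ne c a with rfl | hca
          · exact Or.inl rfl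
          · refine Or.inr ⟨hc.trans hka.symm, ?_⟩
            have hle := hmax c (Finset.mem_filter.mpr ⟨Finset.mem_univ _, hc⟩)
            have hne' : e c ≠ e a := fun h => hca (e.injective h)
            exact lt_of_le_of_ne hle hne'
        · rintro (rfl | ⟨h1, -⟩)
          · exact hka
          · exact h1.trans hka
      have hnotmem : a ∉ Finset.univ.filter (fun c => f₀ c = f₀ a ∧ e c < e a) := by simp
      have hcteq : ∑ b ∈ Fk, L b = (build L f₀).ct L a := by
        rw [hFeq, Finset.sum_insert hnotmem]
        unfold Sched.ct build
        simp only
        ring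
      rw [hcteq]
      exact le_procTime _ _ (Finset.mem_univ a) hka

lemma build_ms (L : ι → ℝ) (hL : ∀ a, 0 < L a) (f₀ : ι → Fin m) :
    (build L f₀).ms L = sSup (Set.range fun k : Fin m =>
      ∑ a ∈ Finset.univ.filter (fun a => f₀ a = k), L a) := by
  unfold Sched.ms
  congr 1
  ext x
  constructor
  · rintro ⟨k, rfl⟩; exact ⟨k, (build_procTime L hL f₀ k).symm⟩
  · rintro ⟨k, rfl⟩; exact ⟨k, build_procTime L hL f₀ k⟩

end TxnAux

/-- If no two jobs conflict, the minimum makespan over all feasible schedules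
formed by the full job set is attained and equals the minimum over all assignments
`f : J → machines` of the maximum machine load (multi-way number partitioning optimum). -/
theorem stmt1 {ι : Type*} [Fintype ι] [DecidableEq ι] {m : ℕ} (hm : 0 < m)
    (L : ι → ℝ) (C : ι → ι → Prop)
    (hL : ∀ a, 0 < L a) (hCsymm : ∀ a b, C a b → C b a) (hCirr : ∀ a, ¬ C a a)
    (hnone : ∀ a b : ι, ¬ C a b) :
    IsLeast {v : ℝ | ∃ s : Sched ι m, s.jobs = Finset.univ ∧ s.Feasible L C ∧ s.ms L = v}
      (sInf {v : ℝ | ∃ f : ι → Fin m,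
        v = sSup (Set.range fun k : Fin m =>
          ∑ a ∈ Finset.univ.filter (fun a => f a = k), L a)}) := by
  classical
  haveI : Nonempty (Fin m) := Fin.pos_iff_nonempty.mp hm
  set val : (ι → Fin m) → ℝ := fun f => sSup (Set.range fun k : Fin m =>
    ∑ a ∈ Finset.univ.filter (fun a => f a = k), L a) with hval
  set T : Set ℝ := {v : ℝ | ∃ f : ι → Fin m, v = val f} with hT
  have hTrange : T = Set.range val := by
    ext x
    simp [hT, eq_comm, Set.mem_setOf_eq]
  have hTfin : T.Finite := by rw [hTrange]; exact Set.finite_range val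
  have hTne : T.Nonempty := ⟨val (Classical.arbitrary (ι → Fin m)), _, rfl⟩
  -- the infimum is attained by some assignment f₀
  obtain ⟨f₀, hf₀⟩ : sInf T ∈ T := hTne.csInf_mem hTfin
  -- upper bounds of loads by procTimes (lower bound part)
  have hlower : ∀ v ∈ {v : ℝ | ∃ s : Sched ι m, s.jobs = Finset.univ ∧
      s.Feasible L C ∧ s.ms L = v}, sInf T ≤ v := by
    rintro v ⟨s, hjobs, hfeas, rfl⟩
    have h1 : sInf T ≤ val s.machine := csInf_le hTfin.bddBelow ⟨s.machine, rfl⟩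
    have h2 : val s.machine ≤ s.ms L := by
      apply csSup_le (Set.range_nonempty _)
      rintro y ⟨k, rfl⟩
      exact (TxnAux.load_le_procTime s L hL C hfeas hjobs k).trans
        (TxnAux.procTime_le_ms hm s L k)
    exact h1.trans h2
  -- membership: the built schedule realizes sInf T
  refine ⟨⟨TxnAux.build L f₀, rfl, TxnAux.build_feasible L hL C hnone f₀, ?_⟩, hlower⟩
  rw [TxnAux.build_ms L hL f₀]
  exact hf₀.symm
end

section
/- The set of all representable schedules contains at least one optimal schedule: for every TxnSP instance there exists a permutation (linear ordering) of the full job set J such that the schedule created from it by the derivation rule has makespan less than or equal to the makespan of every subschedule formed by J. -/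
/-!
Feed the jobs to the derivation rule in the order of their start times in a feasible schedule `o`
of all jobs. Then every job starts no later than in `o`: when `a` is due, all earlier jobs have
been placed no later than in `o`. If every machine were still busy at time `o.start a`, the `m`
jobs keeping them busy would all be running at that instant in `o` as well, hence lie on pairwise
different machines of `o`, one of them on the machine of `a`, which is absurd. So the least
loaded machine is free at `o.start a`, and a conflicting job that precedes `a` in `o` has already
finished there, so `a` may start at `o.start a`. Hence the makespan of this rule schedule is at
most that of `o`, and a permutation minimising the makespan of its rule schedule (there are only
finitely many permutations) is optimal.
-/

namespace Sched

variable {ι : Type*} {m : ℕ} {L : ι → ℝ} {C : ι → ι → Prop}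

lemma procTime_le_iff {s : Sched ι m} {k : Fin m} {c : ℝ} :
    s.procTime L k ≤ c ↔ 0 ≤ c ∧ ∀ b ∈ s.jobs, s.machine b = k → s.ct L b ≤ c := by
  have hfin : {x : ℝ | ∃ a ∈ s.jobs, s.machine a = k ∧ x = s.ct L a}.Finite :=
    (s.jobs.finite_toSet.image (s.ct L)).subset fun x ⟨a, ha, _, hx⟩ => ⟨a, ha, hx.symm⟩
  rw [procTime, csSup_le_iff (hfin.insert 0).bddAbove (Set.insert_nonempty _ _),
    Set.forall_mem_insert]
  simp only [Set.mem_ofPred_eq, forall_exists_index, and_imp]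
  exact and_congr_right fun _ =>
    ⟨fun h b hb hk => h _ b hb hk rfl, fun h _ b hb hk hx => hx ▸ h b hb hk⟩

lemma procTime_nonneg (s : Sched ι m) (k : Fin m) : 0 ≤ s.procTime L k :=
  (procTime_le_iff.1 le_rfl).1

lemma le_procTime {s : Sched ι m} {b : ι} (hb : b ∈ s.jobs) :
    s.ct L b ≤ s.procTime L (s.machine b) :=
  (procTime_le_iff.1 le_rfl).2 b hb rfl

lemma procTime_le_ms (s : Sched ι m) (k : Fin m) : s.procTime L k ≤ s.ms L :=
  le_csSup (Set.finite_range _).bddAbove ⟨k, rfl⟩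

lemma ms_le_iff (hm : 0 < m) {s : Sched ι m} {c : ℝ} :
    s.ms L ≤ c ↔ ∀ k, s.procTime L k ≤ c := by
  have : NeZero m := ⟨hm.ne'⟩
  rw [ms, csSup_le_iff (Set.finite_range _).bddAbove (Set.range_nonempty _),
    Set.forall_mem_range]

lemma ms_le_ms_of_start_le (hm : 0 < m) {s t : Sched ι m} (hjobs : s.jobs ⊆ t.jobs)
    (hstart : ∀ b ∈ s.jobs, s.start b ≤ t.start b) : s.ms L ≤ t.ms L := by
  refine (ms_le_iff hm).2 fun k => procTime_le_iff.2
    ⟨(t.procTime_nonneg k).trans (t.procTime_le_ms k), fun b hb _ => ?_⟩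
  calc s.ct L b ≤ t.ct L b := add_le_add_left (hstart b hb) _
    _ ≤ t.procTime L (t.machine b) := le_procTime (hjobs hb)
    _ ≤ t.ms L := t.procTime_le_ms _

lemma feasible_of_jobs_eq_empty {s : Sched ι m} (h : s.jobs = ∅) : s.Feasible L C := by
  simp [Feasible, h]

lemma Feasible.congr {s t : Sched ι m} (h : s.Feasible L C) (hjobs : t.jobs = s.jobs)
    (hmachine : ∀ b ∈ s.jobs, t.machine b = s.machine b)
    (hstart : ∀ b ∈ s.jobs, t.start b = s.start b) : t.Feasible L C := by
  refine ⟨fun a ha => ?_, fun a ha b hb hab hcond => ?_⟩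
  · rw [hjobs] at ha
    exact hstart a ha ▸ h.1 a ha
  · rw [hjobs] at ha hb
    rw [hmachine a ha, hmachine b hb] at hcond
    simpa only [ct, hstart a ha, hstart b hb] using h.2 a ha b hb hab hcond

lemma Feasible.machine_ne_of_running {o : Sched ι m} (ho : o.Feasible L C) {b c : ι}
    (hb : b ∈ o.jobs) (hc : c ∈ o.jobs) (hbc : b ≠ c) {τ : ℝ}
    (hb₁ : o.start b ≤ τ) (hb₂ : τ < o.ct L b) (hc₁ : o.start c ≤ τ)
    (hc₂ : τ < o.ct L c) :
    o.machine b ≠ o.machine c := fun h => by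
  rcases ho.2 b hb c hc hbc (Or.inl h) with h' | h' <;> linarith

variable [DecidableEq ι]

def insertAt (s : Sched ι m) (a : ι) (k : Fin m) (t : ℝ) : Sched ι m :=
  ⟨insert a s.jobs, Function.update s.machine a k, Function.update s.start a t⟩

variable (L C) in
def AppendableAt (s : Sched ι m) (a : ι) (k : Fin m) (t : ℝ) : Prop :=
  (s.insertAt a k t).Feasible L C ∧ ∀ b ∈ s.jobs, s.machine b = k → s.ct L b ≤ t

lemma appendableAt_iff {s : Sched ι m} (hs : s.Feasible L C) {a : ι} (ha : a ∉ s.jobs)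
    {k : Fin m} {t : ℝ} :
    AppendableAt L C s a k t ↔
      0 ≤ t ∧ (∀ b ∈ s.jobs, s.machine b = k → s.ct L b ≤ t) ∧
      ∀ b ∈ s.jobs, C a b ∨ C b a → s.ct L b ≤ t ∨ t + L a ≤ s.start b := by
  have hne : ∀ b ∈ s.jobs, b ≠ a := fun b hb => ne_of_mem_of_not_mem hb ha
  constructor
  · rintro ⟨hf, hmach⟩
    refine ⟨by simpa [insertAt] using hf.1 a (Finset.mem_insert_self _ _), hmach, ?_⟩
    rintro b hb (hC | hC)
    · simpa [insertAt, ct, Function.update_of_ne (hne b hb), or_comm] using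
        hf.2 a (Finset.mem_insert_self _ _) b (Finset.mem_insert_of_mem hb) (hne b hb).symm
          (Or.inr hC)
    · simpa [insertAt, ct, Function.update_of_ne (hne b hb)] using
        hf.2 b (Finset.mem_insert_of_mem hb) a (Finset.mem_insert_self _ _) (hne b hb)
          (Or.inr hC)
  · rintro ⟨ht, hmach, hconf⟩
    have key : ∀ b ∈ s.jobs, (s.machine b = k ∨ C a b ∨ C b a) →
        s.ct L b ≤ t ∨ t + L a ≤ s.start b := by
      rintro b hb (hk | hC)
      · exact Or.inl (hmach b hb hk)
      · exact hconf b hb hC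
    refine ⟨⟨fun x hx => ?_, fun x hx y hy hxy hcond => ?_⟩, hmach⟩
    · rcases Finset.mem_insert.1 hx with rfl | hx
      · simpa [insertAt] using ht
      · simpa [insertAt, Function.update_of_ne (hne x hx)] using hs.1 x hx
    rcases Finset.mem_insert.1 hx with rfl | hxs <;>
      rcases Finset.mem_insert.1 hy with rfl | hys
    · exact absurd rfl hxy
    · simp only [insertAt, ct, Function.update_self, Function.update_of_ne (hne y hys)]
        at hcond ⊢
      exact (key y hys (by tauto)).symm
    · simp only [insertAt, ct, Function.update_self, Function.update_of_ne (hne x hxs)]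
        at hcond ⊢
      exact key x hxs (by tauto)
    · simp only [insertAt, ct, Function.update_of_ne (hne x hxs),
        Function.update_of_ne (hne y hys)] at hcond ⊢
      exact hs.2 x hxs y hys hxy hcond

/-- The least appendable time exists because every appendable time can be lowered to `0` or to a
completion time without leaving the appendable set. -/
lemma exists_isLeast_appendableAt {s : Sched ι m} (hs : s.Feasible L C) {a : ι}
    (ha : a ∉ s.jobs) (k : Fin m) : ∃ t₀, IsLeast {t | AppendableAt L C s a k t} t₀ := by
  classical
  set T : Finset ℝ := insert 0 (s.jobs.image (s.ct L))
  have hround : ∀ t, AppendableAt L C s a k t →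
      ∃ t' ∈ T, t' ≤ t ∧ AppendableAt L C s a k t' := by
    intro t ht
    obtain ⟨h0, hmach, hconf⟩ := (appendableAt_iff hs ha).1 ht
    set T' := T.filter (· ≤ t)
    have hT' : T'.Nonempty := ⟨0, by simp [T', T, h0]⟩
    have hle : ∀ b ∈ s.jobs, s.ct L b ≤ t → s.ct L b ≤ T'.max' hT' := fun b hb h =>
      T'.le_max' _ (Finset.mem_filter.2
        ⟨Finset.mem_insert_of_mem (Finset.mem_image_of_mem _ hb), h⟩)
    obtain ⟨hmemT, hmax⟩ := Finset.mem_filter.1 (T'.max'_mem hT')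
    refine ⟨_, hmemT, hmax, (appendableAt_iff hs ha).2
      ⟨T'.le_max' 0 (by simp [T', T, h0]), fun b hb hk => hle b hb (hmach b hb hk),
        fun b hb hC => ?_⟩⟩
    rcases hconf b hb hC with h | h
    · exact Or.inl (hle b hb h)
    · exact Or.inr (by linarith)
  have hT : T.Nonempty := Finset.insert_nonempty _ _
  have hmaxT : AppendableAt L C s a k (T.max' hT) := by
    have hub : ∀ b ∈ s.jobs, s.ct L b ≤ T.max' hT := fun b hb =>
      T.le_max' _ (Finset.mem_insert_of_mem (Finset.mem_image_of_mem _ hb))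
    exact (appendableAt_iff hs ha).2 ⟨T.le_max' 0 (Finset.mem_insert_self _ _),
      fun b hb _ => hub b hb, fun b hb _ => Or.inl (hub b hb)⟩
  set G := T.filter (AppendableAt L C s a k)
  have hG : G.Nonempty := ⟨_, Finset.mem_filter.2 ⟨T.max'_mem hT, hmaxT⟩⟩
  refine ⟨G.min' hG, (Finset.mem_filter.1 (G.min'_mem hG)).2, fun t ht => ?_⟩
  obtain ⟨t', ht'T, ht't, ht'⟩ := hround t ht
  exact (G.min'_le t' (Finset.mem_filter.2 ⟨ht'T, ht'⟩)).trans ht't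

lemma exists_insertStep {s : Sched ι m} (hs : s.Feasible L C) {a : ι} (ha : a ∉ s.jobs)
    (k : Fin m) : ∃ s', InsertStep L C s a k s' := by
  obtain ⟨t₀, ⟨hfeas, hmach⟩, hleast⟩ := exists_isLeast_appendableAt hs ha k
  refine ⟨s.insertAt a k t₀, ha, rfl, rfl,
    fun b hb => Function.update_of_ne (ne_of_mem_of_not_mem hb ha) _ _, hfeas,
    by simpa [insertAt] using hmach, fun t hf hmach' => ?_⟩
  simpa [insertAt] using hleast ⟨by simpa [insertAt] using hf, hmach'⟩

lemma InsertStep.start_le {s s' : Sched ι m} {a : ι} {k : Fin m} {t : ℝ}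
    (h : InsertStep L C s a k s') (ht : AppendableAt L C s a k t) : s'.start a ≤ t := by
  obtain ⟨ha, hjobs, hmachine, hkeep, -, -, hleast⟩ := h
  refine hleast t
    (ht.1.congr hjobs (fun b _ => by simp [hmachine, insertAt]) fun b hb => ?_) ht.2
  rcases Finset.mem_insert.1 hb with rfl | hb
  · simp [insertAt]
  · simp [insertAt, Function.update_of_ne (ne_of_mem_of_not_mem hb ha), hkeep b hb]

lemma exists_ruleStep (hm : 0 < m) {s : Sched ι m} (hs : s.Feasible L C) {a : ι}
    (ha : a ∉ s.jobs) : ∃ s', RuleStep L C s a s' := by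
  -- the least loaded machine of least index minimises `k ↦ (procTime k, k)` lexicographically
  obtain ⟨k, -, hk⟩ := Finset.univ.exists_min_image (fun k => toLex (s.procTime L k, k))
    ⟨⟨0, hm⟩, Finset.mem_univ _⟩
  simp only [Finset.mem_univ, Prod.Lex.toLex_le_toLex, true_implies] at hk
  obtain ⟨s', hs'⟩ := exists_insertStep hs ha k
  refine ⟨s', k, fun k' => ?_, fun k' hk' => ?_, hs'⟩
  · rcases hk k' with h | h
    exacts [h.le, h.1.le]
  · rcases hk k' with h | h
    exacts [absurd hk' h.ne', h.2]

lemma exists_ruleApply (hm : 0 < m) {l : List ι} (hl : l.Nodup) {s : Sched ι m}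
    (hs : s.Feasible L C) (hdisj : ∀ x ∈ l, x ∉ s.jobs) : ∃ s', RuleApply L C s l s' := by
  induction l generalizing s with
  | nil => exact ⟨s, rfl⟩
  | cons a l ih =>
    obtain ⟨s₁, hstep⟩ := exists_ruleStep hm hs (hdisj a List.mem_cons_self)
    obtain ⟨-, -, -, -, hjobs, -, -, hfeas, -, -⟩ := id hstep
    have hdisj₁ : ∀ x ∈ l, x ∉ s₁.jobs := fun x hx => by
      rw [hjobs, Finset.mem_insert, not_or]
      exact ⟨fun h => (List.nodup_cons.1 hl).1 (h ▸ hx), hdisj x (List.mem_cons_of_mem _ hx)⟩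
    obtain ⟨s', hs'⟩ := ih (List.nodup_cons.1 hl).2 hfeas hdisj₁
    exact ⟨s', s₁, hstep, hs'⟩

lemma exists_procTime_le_start (hL : ∀ x, 0 < L x) {o s : Sched ι m} (ho : o.Feasible L C)
    {a : ι} (ha : a ∉ s.jobs) (hso : insert a s.jobs ⊆ o.jobs)
    (hstart : ∀ b ∈ s.jobs, s.start b ≤ o.start b)
    (hbefore : ∀ b ∈ s.jobs, o.start b ≤ o.start a) :
    ∃ k, s.procTime L k ≤ o.start a := by
  have hao : a ∈ o.jobs := hso (Finset.mem_insert_self _ _)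
  by_contra! hbusy
  have hwit : ∀ k, ∃ b ∈ s.jobs, s.machine b = k ∧ o.start a < s.ct L b := by
    intro k
    by_contra! h
    exact (hbusy k).not_ge (procTime_le_iff.2 ⟨ho.1 a hao, h⟩)
  choose w hws hwk hwct using hwit
  have hwo : ∀ k, w k ∈ o.jobs := fun k => hso (Finset.mem_insert_of_mem (hws k))
  have hrun : ∀ k, o.start (w k) ≤ o.start a ∧ o.start a < o.ct L (w k) := fun k =>
    ⟨hbefore _ (hws k), (hwct k).trans_le (add_le_add_left (hstart _ (hws k)) _)⟩
  have hinj : Function.Injective fun k => o.machine (w k) := by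
    intro k k' h
    by_contra hkk
    exact ho.machine_ne_of_running (hwo k) (hwo k')
      (fun he => hkk (by rw [← hwk k, ← hwk k', he])) (hrun k).1 (hrun k).2 (hrun k').1
      (hrun k').2 h
  obtain ⟨k, hk⟩ := Finite.injective_iff_surjective.1 hinj (o.machine a)
  exact ho.machine_ne_of_running (hwo k) hao (ne_of_mem_of_not_mem (hws k) ha) (hrun k).1 (hrun k).2
    le_rfl (lt_add_of_pos_right _ (hL a)) hk

lemma RuleStep.start_le (hL : ∀ x, 0 < L x) {o s s₁ : Sched ι m} (ho : o.Feasible L C)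
    (hs : s.Feasible L C) {a : ι} (hstep : RuleStep L C s a s₁)
    (hso : insert a s.jobs ⊆ o.jobs) (hstart : ∀ b ∈ s.jobs, s.start b ≤ o.start b)
    (hbefore : ∀ b ∈ s.jobs, o.start b ≤ o.start a) : s₁.start a ≤ o.start a := by
  obtain ⟨k, hkmin, -, hins⟩ := hstep
  have ha : a ∉ s.jobs := hins.1
  have hao : a ∈ o.jobs := hso (Finset.mem_insert_self _ _)
  obtain ⟨k', hk'⟩ := exists_procTime_le_start hL ho ha hso hstart hbefore
  refine hins.start_le ((appendableAt_iff hs ha).2 ⟨ho.1 a hao,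
    fun b hb hbk => by subst hbk; exact (le_procTime hb).trans ((hkmin k').trans hk'),
    fun b hb hC => ?_⟩)
  have hbo : b ∈ o.jobs := hso (Finset.mem_insert_of_mem hb)
  have hba : b ≠ a := ne_of_mem_of_not_mem hb ha
  -- in `o`, the conflicting job `b` starts no later than `a`, so it finishes before `a` starts
  have hdis : o.ct L a ≤ o.start b ∨ o.ct L b ≤ o.start a := by
    rcases hC with hC | hC
    · exact ho.2 a hao b hbo hba.symm (Or.inr hC)
    · exact (ho.2 b hbo a hao hba (Or.inr hC)).symm
  rcases hdis with h | h
  · exact absurd h (not_le.2 ((hbefore b hb).trans_lt (lt_add_of_pos_right _ (hL a))))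
  · exact Or.inl ((add_le_add_left (hstart b hb) _).trans h)

lemma RuleApply.start_le (hL : ∀ x, 0 < L x) {o : Sched ι m} (ho : o.Feasible L C) {l : List ι}
    {s s' : Sched ι m} (happ : RuleApply L C s l s') (hs : s.Feasible L C)
    (hl : l.Pairwise fun x y => o.start x ≤ o.start y) (hso : s.jobs ∪ l.toFinset ⊆ o.jobs)
    (hstart : ∀ b ∈ s.jobs, s.start b ≤ o.start b)
    (hbefore : ∀ b ∈ s.jobs, ∀ x ∈ l, o.start b ≤ o.start x) :
    ∀ b ∈ s'.jobs, s'.start b ≤ o.start b := by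
  induction l generalizing s with
  | nil => exact (show s' = s from happ) ▸ hstart
  | cons a l ih =>
    obtain ⟨s₁, hstep, happ⟩ := happ
    obtain ⟨-, -, -, -, hjobs, -, hkeep, hfeas, -, -⟩ := id hstep
    have hso' : insert a s.jobs ⊆ o.jobs := fun x hx => hso (by
      rcases Finset.mem_insert.1 hx with rfl | hx <;> simp [*])
    have hsta :=
      hstep.start_le hL ho hs hso' hstart fun b hb => hbefore b hb a List.mem_cons_self
    refine ih happ hfeas (List.pairwise_cons.1 hl).2 ?_ (fun b hb => ?_) (fun b hb x hx => ?_)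
    · rwa [hjobs, Finset.insert_union, ← Finset.union_insert, ← List.toFinset_cons]
    · rcases Finset.mem_insert.1 (hjobs ▸ hb) with rfl | hb
      · exact hsta
      · exact hkeep b hb ▸ hstart b hb
    · rcases Finset.mem_insert.1 (hjobs ▸ hb) with rfl | hb
      · exact (List.pairwise_cons.1 hl).1 x hx
      · exact hbefore b hb x (List.mem_cons_of_mem _ hx)

lemma ms_le_of_ruleApply [Fintype ι] (hm : 0 < m) (hL : ∀ x, 0 < L x) {o e s : Sched ι m}
    {l : List ι} (ho : o.Feasible L C) (hfull : o.jobs = Finset.univ) (he : e.jobs = ∅)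
    (hl : l.Pairwise fun x y => o.start x ≤ o.start y) (happ : RuleApply L C e l s) :
    s.ms L ≤ o.ms L :=
  ms_le_ms_of_start_le hm (hfull ▸ Finset.subset_univ _) <|
    happ.start_le hL ho (feasible_of_jobs_eq_empty he) hl (by simp [hfull]) (by simp [he])
      (by simp [he])

end Sched

lemma List.exists_perm_pairwise_le {α β : Type*} [LinearOrder β] (f : α → β) (l : List α) :
    ∃ l' : List α, l'.Perm l ∧ l'.Pairwise fun x y => f x ≤ f y :=
  ⟨l.mergeSort fun x y => decide (f x ≤ f y), l.mergeSort_perm _, by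
    simpa using List.pairwise_mergeSort (le := fun x y => decide (f x ≤ f y))
      (fun _ _ _ h₁ h₂ => by simpa using le_trans (by simpa using h₁) (by simpa using h₂))
      (fun x y => by simpa using le_total (f x) (f y)) l⟩

theorem stmt11_general {ι : Type*} [Fintype ι] [DecidableEq ι] {m : ℕ} (hm : 0 < m)
    (L : ι → ℝ) (C : ι → ι → Prop)
    (hL : ∀ a, 0 < L a) :
    ∃ (l : List ι) (e s : Sched ι m), l.Nodup ∧ (∀ a : ι, a ∈ l) ∧ e.jobs = ∅ ∧
      Sched.RuleApply L C e l s ∧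
      ∀ t : Sched ι m, t.jobs = Finset.univ → t.IsSub L C → s.ms L ≤ t.ms L := by
  set e : Sched ι m := ⟨∅, fun _ => ⟨0, hm⟩, fun _ => 0⟩
  have he : e.Feasible L C := Sched.feasible_of_jobs_eq_empty rfl
  have hF : ∀ l : List ι, ∃ s, l.Nodup → Sched.RuleApply L C e l s := fun l => by
    by_cases hl : l.Nodup
    · exact (Sched.exists_ruleApply hm hl he (by simp [e])).imp fun _ h _ => h
    · exact ⟨e, fun h => absurd h hl⟩
  choose F hF using hF
  set P := (Finset.univ : Finset ι).toList.permutations.toFinset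
  have hP : ∀ {l}, l ∈ P → l.Nodup ∧ ∀ a, a ∈ l := fun hl => by
    have hl := List.mem_permutations.1 (List.mem_toFinset.1 hl)
    exact ⟨hl.nodup_iff.2 (Finset.nodup_toList _), fun a => hl.mem_iff.2 (by simp)⟩
  obtain ⟨l₀, hl₀, hmin⟩ := P.exists_min_image (fun l => (F l).ms L)
    ⟨_, List.mem_toFinset.2 (List.mem_permutations.2 (List.Perm.refl _))⟩
  refine ⟨l₀, e, F l₀, (hP hl₀).1, (hP hl₀).2, rfl, hF l₀ (hP hl₀).1,
    fun t ht htsub => ?_⟩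
  obtain ⟨l, hperm, hsorted⟩ :=
    List.exists_perm_pairwise_le t.start (Finset.univ : Finset ι).toList
  have hl : l ∈ P := List.mem_toFinset.2 (List.mem_permutations.2 hperm)
  exact (hmin l hl).trans
    (Sched.ms_le_of_ruleApply hm hL htsub.1 ht rfl hsorted (hF l (hP hl).1))

/-- The set of all representable schedules contains an optimal schedule:
there is a permutation (a duplicate-free enumeration) of the full job set such that the
schedule created from it by the derivation rule has makespan ≤ the makespan of every
subschedule formed by the full job set. -/
theorem stmt11 {ι : Type*} [Fintype ι] [DecidableEq ι] {m : ℕ} (hm : 0 < m)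
    (L : ι → ℝ) (C : ι → ι → Prop)
    (hL : ∀ a, 0 < L a) (hCsymm : ∀ a b, C a b → C b a) (hCirr : ∀ a, ¬ C a a) :
    ∃ (l : List ι) (e s : Sched ι m), l.Nodup ∧ (∀ a : ι, a ∈ l) ∧ e.jobs = ∅ ∧
      Sched.RuleApply L C e l s ∧
      ∀ t : Sched ι m, t.jobs = Finset.univ → t.IsSub L C → s.ms L ≤ t.ms L :=
  stmt11_general hm L C hL
end
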